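/- arXiv:math-ph/9912025 — 3 statements merged into one kernel-verified Lean document; each statement's English description precedes it below -/
import Mathlib

section
/- Let d ≥ 1 and let C : ℝ^d → ℝ satisfy |C(x)| ≤ C(0) for all x, C(0) > 0, and the Hölder condition C(0) − C(x) ≤ b|x|_∞^β for all |x|_∞ ≤ θ, where b > 0, β ∈ (0,1], and 0 < θ ≤ min{1, (2C(0)/b)^{1/β}}. Then for every ℓ > 1 the entropy integral satisfies 𝒥(ℓ) ≤ √(2 C(0) ln(ℓ/θ)/ln 2) + √(2 b ℓ^β/(β ln 2)) · ∫_{√((β/2) ln(ℓ/θ))}^{∞} e^{−p²} dp; in particular 𝒥(ℓ) < ∞. -/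
open MeasureTheory

lemma my_sqrt_exp (x : ℝ) : Real.sqrt (Real.exp x) = Real.exp (x / 2) := by
  rw [show Real.exp x = Real.exp (x / 2) ^ 2 by rw [sq, ← Real.exp_add]; ring_nf]
  exact Real.sqrt_sq (Real.exp_pos _).le

/-- Bound on the entropy integral `𝒥(ℓ)` of a covariance function that is
locally Hölder continuous at the origin; in particular `𝒥(ℓ) < ∞`. -/
theorem entropy_integral_bound
    (d : ℕ) (hd : 1 ≤ d)
    (C : (Fin d → ℝ) → ℝ)
    (hC0pos : 0 < C 0) (hCbd : ∀ x, |C x| ≤ C 0)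
    (b β θ : ℝ) (hb : 0 < b) (hβ : 0 < β) (hβ1 : β ≤ 1)
    (hθpos : 0 < θ) (hθle : θ ≤ min 1 ((2 * C 0 / b) ^ (1 / β)))
    (hHolder : ∀ x : Fin d → ℝ, ‖x‖ ≤ θ → C 0 - C x ≤ b * ‖x‖ ^ β)
    (ℓ : ℝ) (hℓ : 1 < ℓ) :
    ∫⁻ p in Set.Ioi (1 : ℝ),
        ENNReal.ofReal (sSup ((fun x => Real.sqrt (C 0 - C x)) ''
          {x : Fin d → ℝ | ‖x‖ ≤ ℓ * 2 ^ (-(p ^ 2))}))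
      ≤ ENNReal.ofReal
          (Real.sqrt (2 * C 0 * Real.log (ℓ / θ) / Real.log 2) +
            Real.sqrt (2 * b * ℓ ^ β / (β * Real.log 2)) *
              ∫ p in Set.Ioi (Real.sqrt ((β / 2) * Real.log (ℓ / θ))),
                Real.exp (-(p ^ 2))) := by
  have hθ1 : θ ≤ 1 := le_trans hθle (min_le_left _ _)
  have hℓ0 : (0:ℝ) < ℓ := by linarith
  have hlg2 : 0 < Real.log 2 := Real.log_pos one_lt_two
  have hratio : 1 < ℓ / θ := by rw [lt_div_iff₀ hθpos]; nlinarith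
  have hL : 0 < Real.log (ℓ / θ) := Real.log_pos hratio
  set lg2 := Real.log 2
  set L := Real.log (ℓ / θ)
  set p₀ := Real.sqrt (L / lg2) with hp0def
  have hp0 : 0 ≤ p₀ := Real.sqrt_nonneg _
  set M := max 1 p₀ with hMdef
  have hM1 : (1:ℝ) ≤ M := le_max_left _ _
  have hMp0 : p₀ ≤ M := le_max_right _ _
  set c := β * lg2 / 2 with hcdef
  have hc : 0 < c := by positivity
  have hℓβ : (0:ℝ) < ℓ ^ β := Real.rpow_pos_of_pos hℓ0 β
  set A := Real.sqrt (b * ℓ ^ β) with hAdef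
  set q₀ := Real.sqrt (β / 2 * L) with hq0def
  set F : ℝ → ENNReal := fun p =>
    ENNReal.ofReal (sSup ((fun x => Real.sqrt (C 0 - C x)) ''
      {x : Fin d → ℝ | ‖x‖ ≤ ℓ * 2 ^ (-(p ^ 2))})) with hFdef
  -- crude bound on the sup
  have hsup1 : ∀ p : ℝ,
      sSup ((fun x => Real.sqrt (C 0 - C x)) ''
        {x : Fin d → ℝ | ‖x‖ ≤ ℓ * 2 ^ (-(p ^ 2))}) ≤ Real.sqrt (2 * C 0) := by
    intro p
    apply Real.sSup_le _ (Real.sqrt_nonneg _)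
    rintro y ⟨x, hx, rfl⟩
    apply Real.sqrt_le_sqrt
    have := (abs_le.mp (hCbd x)).1
    linarith
  -- for p ≥ M, the radius is ≤ θ
  have hrle : ∀ p : ℝ, M ≤ p → ℓ * 2 ^ (-(p ^ 2)) ≤ θ := by
    intro p hp
    have hp0p : p₀ ≤ p := le_trans hMp0 hp
    have hsq : L / lg2 ≤ p ^ 2 := by
      calc L / lg2 = p₀ ^ 2 := (Real.sq_sqrt (by positivity)).symm
        _ ≤ p ^ 2 := by nlinarith
    have h2 : (2:ℝ) ^ (-(p ^ 2)) ≤ θ / ℓ := by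
      rw [Real.rpow_def_of_pos two_pos]
      have hkey : lg2 * -(p ^ 2) ≤ -L := by
        have := (div_le_iff₀ hlg2).mp hsq
        nlinarith
      calc Real.exp (lg2 * -(p ^ 2)) ≤ Real.exp (-L) := Real.exp_le_exp.mpr hkey
        _ = θ / ℓ := by
            rw [Real.exp_neg, Real.exp_log (by positivity), inv_div]
    calc ℓ * 2 ^ (-(p ^ 2)) ≤ ℓ * (θ / ℓ) := mul_le_mul_of_nonneg_left h2 hℓ0.le
      _ = θ := by field_simp
  -- refined bound on the sup for p ≥ M
  have hsup2 : ∀ p : ℝ, M ≤ p →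
      sSup ((fun x => Real.sqrt (C 0 - C x)) ''
        {x : Fin d → ℝ | ‖x‖ ≤ ℓ * 2 ^ (-(p ^ 2))})
        ≤ A * Real.exp (-(c * p ^ 2)) := by
    intro p hp
    apply Real.sSup_le _ (by positivity)
    rintro y ⟨x, hx, rfl⟩
    have hxr : ‖x‖ ≤ ℓ * 2 ^ (-(p ^ 2)) := hx
    have hxθ : ‖x‖ ≤ θ := le_trans hxr (hrle p hp)
    have h1 : C 0 - C x ≤ b * (ℓ ^ β * Real.exp (lg2 * (-(p ^ 2) * β))) := by
      have h2 : (ℓ * 2 ^ (-(p ^ 2))) ^ β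
          = ℓ ^ β * Real.exp (lg2 * (-(p ^ 2) * β)) := by
        rw [Real.mul_rpow hℓ0.le (Real.rpow_pos_of_pos two_pos _).le,
          ← Real.rpow_mul two_pos.le, Real.rpow_def_of_pos two_pos]
      rw [← h2]
      calc C 0 - C x ≤ b * ‖x‖ ^ β := hHolder x hxθ
        _ ≤ b * (ℓ * 2 ^ (-(p ^ 2))) ^ β :=
            mul_le_mul_of_nonneg_left
              (Real.rpow_le_rpow (norm_nonneg x) hxr hβ.le) hb.le
    calc Real.sqrt (C 0 - C x)
        ≤ Real.sqrt (b * ℓ ^ β * Real.exp (lg2 * (-(p ^ 2) * β))) := by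
          apply Real.sqrt_le_sqrt; linarith
      _ = A * Real.exp (-(c * p ^ 2)) := by
          rw [Real.sqrt_mul (by positivity), my_sqrt_exp, ← hAdef]
          congr 1
          rw [hcdef]; ring
  -- split the integral at M
  have hsplit : Set.Ioi (1:ℝ) = Set.Ioc 1 M ∪ Set.Ioi M :=
    (Set.Ioc_union_Ioi_eq_Ioi hM1).symm
  have hdisj : Disjoint (Set.Ioc (1:ℝ) M) (Set.Ioi M) := by
    apply Set.disjoint_left.mpr
    intro a ha ha'
    exact absurd ha.2 (not_le.mpr ha')
  rw [show (∫⁻ p in Set.Ioi (1:ℝ), F p) = (∫⁻ p in Set.Ioc (1:ℝ) M, F p)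
      + ∫⁻ p in Set.Ioi M, F p by rw [← lintegral_union measurableSet_Ioi hdisj, ← hsplit]]
  -- first piece
  have hT1 : (∫⁻ p in Set.Ioc (1:ℝ) M, F p)
      ≤ ENNReal.ofReal (Real.sqrt (2 * C 0 * L / lg2)) := by
    calc (∫⁻ p in Set.Ioc (1:ℝ) M, F p)
        ≤ ∫⁻ _ in Set.Ioc (1:ℝ) M, ENNReal.ofReal (Real.sqrt (2 * C 0)) :=
          setLIntegral_mono' measurableSet_Ioc
            (fun p _ => ENNReal.ofReal_le_ofReal (hsup1 p))
      _ = ENNReal.ofReal (Real.sqrt (2 * C 0)) * volume (Set.Ioc (1:ℝ) M) :=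
          setLIntegral_const _ _
      _ = ENNReal.ofReal (Real.sqrt (2 * C 0)) * ENNReal.ofReal (M - 1) := by
          rw [Real.volume_Ioc]
      _ ≤ ENNReal.ofReal (Real.sqrt (2 * C 0)) * ENNReal.ofReal p₀ := by
          gcongr
          have : M ≤ p₀ + 1 := max_le (by linarith) (by linarith)
          linarith
      _ = ENNReal.ofReal (Real.sqrt (2 * C 0) * p₀) :=
          (ENNReal.ofReal_mul (Real.sqrt_nonneg _)).symm
      _ = ENNReal.ofReal (Real.sqrt (2 * C 0 * L / lg2)) := by
          rw [hp0def, ← Real.sqrt_mul (by positivity)]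
          congr 2
          ring
  -- second piece
  have hgauss : IntegrableOn (fun p : ℝ => Real.exp (-(p ^ 2))) (Set.Ioi q₀) := by
    have := integrable_exp_neg_mul_sq (b := 1) one_pos
    simpa using this.integrableOn
  have hIq0 : 0 ≤ ∫ p in Set.Ioi q₀, Real.exp (-(p ^ 2)) :=
    setIntegral_nonneg measurableSet_Ioi (fun p _ => (Real.exp_pos _).le)
  have hInt : IntegrableOn (fun p : ℝ => A * Real.exp (-(c * p ^ 2))) (Set.Ioi M) := by
    have := (integrable_exp_neg_mul_sq hc).const_mul A
    simpa [neg_mul] using this.integrableOn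
  have hreal : (∫ p in Set.Ioi M, A * Real.exp (-(c * p ^ 2)))
      ≤ Real.sqrt (2 * b * ℓ ^ β / (β * lg2)) * ∫ p in Set.Ioi q₀, Real.exp (-(p ^ 2)) := by
    have hsc : 0 < Real.sqrt c := Real.sqrt_pos.mpr hc
    have hcomp : (∫ p in Set.Ioi M, Real.exp (-(c * p ^ 2)))
        = (Real.sqrt c)⁻¹ * ∫ q in Set.Ioi (Real.sqrt c * M), Real.exp (-(q ^ 2)) := by
      have := integral_comp_mul_left_Ioi (fun q => Real.exp (-(q ^ 2))) M hsc
      simp only [smul_eq_mul] at this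
      rw [← this]
      congr 1
      ext p
      congr 1
      rw [mul_pow, Real.sq_sqrt hc.le]
    have hq0le : q₀ ≤ Real.sqrt c * M := by
      have : Real.sqrt c * p₀ = q₀ := by
        rw [hq0def, hp0def, ← Real.sqrt_mul hc.le]
        congr 1
        rw [hcdef]
        field_simp
      calc q₀ = Real.sqrt c * p₀ := this.symm
        _ ≤ Real.sqrt c * M := by gcongr
    have hmono : (∫ q in Set.Ioi (Real.sqrt c * M), Real.exp (-(q ^ 2)))
        ≤ ∫ q in Set.Ioi q₀, Real.exp (-(q ^ 2)) := by
      apply setIntegral_mono_set hgauss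
        (Filter.Eventually.of_forall fun p => (Real.exp_pos _).le)
      exact Filter.Eventually.of_forall (Set.Ioi_subset_Ioi hq0le)
    have hA : A * (Real.sqrt c)⁻¹ = Real.sqrt (2 * b * ℓ ^ β / (β * lg2)) := by
      rw [hAdef, ← Real.sqrt_inv, ← Real.sqrt_mul (by positivity)]
      congr 1
      rw [hcdef]
      field_simp
    calc (∫ p in Set.Ioi M, A * Real.exp (-(c * p ^ 2)))
        = A * ∫ p in Set.Ioi M, Real.exp (-(c * p ^ 2)) := integral_const_mul _ _
      _ = A * ((Real.sqrt c)⁻¹ * ∫ q in Set.Ioi (Real.sqrt c * M), Real.exp (-(q ^ 2))) := by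
          rw [hcomp]
      _ ≤ A * ((Real.sqrt c)⁻¹ * ∫ q in Set.Ioi q₀, Real.exp (-(q ^ 2))) := by
          apply mul_le_mul_of_nonneg_left _ (Real.sqrt_nonneg _)
          exact mul_le_mul_of_nonneg_left hmono (by positivity)
      _ = Real.sqrt (2 * b * ℓ ^ β / (β * lg2)) * ∫ q in Set.Ioi q₀, Real.exp (-(q ^ 2)) := by
          rw [← hA]; ring
  have hT2 : (∫⁻ p in Set.Ioi M, F p)
      ≤ ENNReal.ofReal
          (Real.sqrt (2 * b * ℓ ^ β / (β * lg2)) * ∫ p in Set.Ioi q₀, Real.exp (-(p ^ 2))) := by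
    calc (∫⁻ p in Set.Ioi M, F p)
        ≤ ∫⁻ p in Set.Ioi M, ENNReal.ofReal (A * Real.exp (-(c * p ^ 2))) :=
          setLIntegral_mono' measurableSet_Ioi
            (fun p hp => ENNReal.ofReal_le_ofReal (hsup2 p (le_of_lt hp)))
      _ = ENNReal.ofReal (∫ p in Set.Ioi M, A * Real.exp (-(c * p ^ 2))) :=
          (ofReal_integral_eq_lintegral_ofReal hInt
            (Filter.Eventually.of_forall fun p => by positivity)).symm
      _ ≤ _ := ENNReal.ofReal_le_ofReal hreal
  calc (∫⁻ p in Set.Ioc (1:ℝ) M, F p) + ∫⁻ p in Set.Ioi M, F p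
      ≤ ENNReal.ofReal (Real.sqrt (2 * C 0 * L / lg2))
        + ENNReal.ofReal
            (Real.sqrt (2 * b * ℓ ^ β / (β * lg2)) * ∫ p in Set.Ioi q₀, Real.exp (-(p ^ 2))) :=
        add_le_add hT1 hT2
    _ = _ := by
        rw [← ENNReal.ofReal_add (Real.sqrt_nonneg _) (by positivity)]
end

section
/- Let d ≥ 1 and let C : ℝ^d → ℝ satisfy |C(x)| ≤ C(0) for all x, C(0) > 0, and the Hölder condition C(0) − C(x) ≤ b|x|_∞^β for all |x|_∞ ≤ θ, where b > 0, β ∈ (0,1], and 0 < θ ≤ min{1, (2C(0)/b)^{1/β}}. Then there exists a length ℓ_H ∈ (1,∞), depending only on θ and β, such that for all ℓ ≥ ℓ_H one has √(C(0)) + (2 + 2^{3/2}) 𝒥(ℓ) ≤ 10 √(C(0) ln ℓ). -/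
/-
Put `p₀ = √(log₂ (ℓ / θ))`, so that the radius `ℓ 2^{-p²}` drops below `θ` exactly at `p = p₀`.
Up to `p₀` the integrand is at most `√(2 C(0))` because `|C| ≤ C(0)`. Beyond `p₀` the Hölder bound
and `b θ^β ≤ 2 C(0)` (a rewriting of `θ ≤ (2 C(0) / b)^{1/β}`) give the Gaussian tail
`√(2 C(0)) 2^{β (p₀² - p²) / 2}`, whose integral is at most `√(2 C(0)) / (β log 2)`. Hence
`𝒥(ℓ) ≤ √(2 C(0)) (p₀ + 1 / (β log 2))`; since `(2 + 2^{3/2}) √2 p₀ ≈ 8.2 √(log ℓ) + O_θ(1)`,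
the bound `10 √(C(0) log ℓ)` wins once `ℓ` is large in terms of `θ` and `β`.
-/

open MeasureTheory Real Set

lemma mul_rpow_le_of_le_rpow_one_div {b β θ K : ℝ} (hb : 0 < b) (hβ : 0 < β) (hθ : 0 ≤ θ)
    (hK : 0 ≤ K) (h : θ ≤ (K / b) ^ (1 / β)) : b * θ ^ β ≤ K := by
  rw [one_div, le_rpow_inv_iff_of_pos hθ (by positivity) hβ] at h
  rwa [le_div_iff₀' hb] at h

section GaussianTail

variable {g : ℝ → ℝ} {a p₀ A c : ℝ}

lemma integrableOn_Ioi_and_setIntegral_le_of_le_exp_sq (hA : 0 ≤ A) (hc : 0 < c)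
    (hp₀ : 0 < p₀)
    (hmeas : AEStronglyMeasurable g (volume.restrict (Ioi p₀)))
    (hnonneg : ∀ p ∈ Ioi p₀, 0 ≤ g p)
    (htail : ∀ p ∈ Ioi p₀, g p ≤ A * exp (c * (p₀ ^ 2 - p ^ 2))) :
    IntegrableOn g (Ioi p₀) ∧ ∫ p in Ioi p₀, g p ≤ A / (2 * c * p₀) := by
  set κ := 2 * c * p₀
  have hκ : 0 < κ := by positivity
  -- `p₀ ^ 2 - p ^ 2 ≤ 2 p₀ (p₀ - p)`: the Gaussian tail is dominated by an exponential one.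
  have hdom : ∀ p ∈ Ioi p₀, g p ≤ A * exp (κ * p₀) * exp (-κ * p) := fun p hp => by
    refine (htail p hp).trans ?_
    rw [mul_assoc, ← exp_add]
    gcongr
    nlinarith [sq_nonneg (p - p₀)]
  have hexp : IntegrableOn (fun p => A * exp (κ * p₀) * exp (-κ * p)) (Ioi p₀) :=
    (integrableOn_exp_mul_Ioi (neg_lt_zero.2 hκ) p₀).const_mul _
  have hint : IntegrableOn g (Ioi p₀) :=
    hexp.mono' hmeas <| (ae_restrict_iff' measurableSet_Ioi).2 <| ae_of_all _ fun p hp => by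
      rw [norm_of_nonneg (hnonneg p hp)]
      exact hdom p hp
  refine ⟨hint, (setIntegral_mono_on hint hexp measurableSet_Ioi hdom).trans_eq ?_⟩
  rw [integral_const_mul, integral_exp_mul_Ioi (neg_lt_zero.2 hκ), mul_assoc, mul_div_assoc',
    mul_neg, ← exp_add]
  field_simp
  simp

lemma integrableOn_Ioi_and_setIntegral_le_of_bounded_of_le_exp_sq (hc : 0 < c) (ha : a ≤ p₀)
    (hp₀ : 0 < p₀) (hmeas : AEStronglyMeasurable g (volume.restrict (Ioi a)))
    (hnonneg : ∀ p ∈ Ioi a, 0 ≤ g p) (hle : ∀ p ∈ Ioi a, g p ≤ A)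
    (htail : ∀ p ∈ Ioi p₀, g p ≤ A * exp (c * (p₀ ^ 2 - p ^ 2))) :
    IntegrableOn g (Ioi a) ∧ ∫ p in Ioi a, g p ≤ A * (p₀ - a) + A / (2 * c * p₀) := by
  have hA : 0 ≤ A := (hnonneg _ (lt_add_one a)).trans (hle _ (lt_add_one a))
  have hnorm : ∀ p ∈ Ioc a p₀, ‖g p‖ ≤ A := fun p hp => by
    rw [norm_of_nonneg (hnonneg p hp.1)]
    exact hle p hp.1
  have hhead : IntegrableOn g (Ioc a p₀) :=
    (integrableOn_const (C := A) measure_Ioc_lt_top.ne).mono'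
      (hmeas.mono_set Ioc_subset_Ioi_self)
      ((ae_restrict_iff' measurableSet_Ioc).2 (ae_of_all _ hnorm))
  obtain ⟨htail_int, htail_le⟩ := integrableOn_Ioi_and_setIntegral_le_of_le_exp_sq hA hc hp₀
    (hmeas.mono_set (Ioi_subset_Ioi ha)) (fun p hp => hnonneg p (ha.trans_lt hp)) htail
  have hhead_le : ∫ p in Ioc a p₀, g p ≤ A * (p₀ - a) := by
    simpa [volume_real_Ioc_of_le ha] using
      (le_abs_self _).trans
        (norm_setIntegral_le_of_norm_le_const (μ := volume) measure_Ioc_lt_top hnorm)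
  rw [← Ioc_union_Ioi_eq_Ioi ha]
  refine ⟨hhead.union htail_int, ?_⟩
  rw [setIntegral_union (Ioc_disjoint_Ioi le_rfl) measurableSet_Ioi hhead htail_int]
  exact add_le_add hhead_le htail_le

end GaussianTail

section DeficitModulus

variable {E : Type*} [SeminormedAddCommGroup E] {C : E → ℝ} {r s : ℝ}

noncomputable def deficitModulus (C : E → ℝ) (r : ℝ) : ℝ :=
  sSup ((fun x => √(C 0 - C x)) '' {x | ‖x‖ ≤ r})

lemma sqrt_sub_le_sqrt_two_mul (hC : ∀ x, |C x| ≤ C 0) (x : E) :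
    √(C 0 - C x) ≤ √(2 * C 0) :=
  sqrt_le_sqrt (by linarith [(abs_le.mp (hC x)).1])

lemma bddAbove_sqrt_sub_image (hC : ∀ x, |C x| ≤ C 0) (t : Set E) :
    BddAbove ((fun x => √(C 0 - C x)) '' t) :=
  ⟨_, forall_mem_image.2 fun x _ => sqrt_sub_le_sqrt_two_mul hC x⟩

lemma deficitModulus_le {M : ℝ} (hr : 0 ≤ r) (h : ∀ x, ‖x‖ ≤ r → √(C 0 - C x) ≤ M) :
    deficitModulus C r ≤ M :=
  csSup_le ⟨_, mem_image_of_mem _ (show (0 : E) ∈ {x | ‖x‖ ≤ r} by simpa using hr)⟩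
    (forall_mem_image.2 h)

lemma deficitModulus_nonneg (hC : ∀ x, |C x| ≤ C 0) (hr : 0 ≤ r) :
    0 ≤ deficitModulus C r := by
  simpa [deficitModulus] using le_csSup (bddAbove_sqrt_sub_image hC _)
    (mem_image_of_mem (fun x => √(C 0 - C x)) (show (0 : E) ∈ {x | ‖x‖ ≤ r} by simpa using hr))

lemma deficitModulus_mono (hC : ∀ x, |C x| ≤ C 0) (hr : 0 ≤ r) (hrs : r ≤ s) :
    deficitModulus C r ≤ deficitModulus C s :=
  deficitModulus_le hr fun _ hx =>
    le_csSup (bddAbove_sqrt_sub_image hC _) (mem_image_of_mem _ (hx.trans hrs))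

lemma deficitModulus_le_sqrt_two_mul (hC : ∀ x, |C x| ≤ C 0) (hr : 0 ≤ r) :
    deficitModulus C r ≤ √(2 * C 0) :=
  deficitModulus_le hr fun x _ => sqrt_sub_le_sqrt_two_mul hC x

lemma deficitModulus_le_of_holder {b β θ : ℝ} (hb : 0 ≤ b) (hβ : 0 ≤ β) (hθ : 0 < θ)
    (hbθ : b * θ ^ β ≤ 2 * C 0) (hHolder : ∀ x, ‖x‖ ≤ θ → C 0 - C x ≤ b * ‖x‖ ^ β)
    (hr : 0 ≤ r) (hrθ : r ≤ θ) :
    deficitModulus C r ≤ √(2 * C 0 * (r / θ) ^ β) :=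
  deficitModulus_le hr fun x hx => sqrt_le_sqrt <| calc
    C 0 - C x ≤ b * ‖x‖ ^ β := hHolder x (hx.trans hrθ)
    _ ≤ b * r ^ β := by gcongr
    _ = b * θ ^ β * (r / θ) ^ β := by rw [div_rpow hr hθ.le]; field_simp
    _ ≤ 2 * C 0 * (r / θ) ^ β := by gcongr

lemma antitoneOn_deficitModulus_dyadic (hC : ∀ x, |C x| ≤ C 0) {ℓ : ℝ} (hℓ : 0 ≤ ℓ) :
    AntitoneOn (fun p : ℝ => deficitModulus C (ℓ * 2 ^ (-(p ^ 2)))) (Ici 0) :=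
  fun p hp q _ hpq => deficitModulus_mono hC (by positivity) <| by
    gcongr
    norm_num

lemma deficitModulus_dyadic_le_exp {b β θ ℓ p₀ p : ℝ} (hb : 0 ≤ b) (hβ : 0 ≤ β)
    (hθ : 0 < θ) (hbθ : b * θ ^ β ≤ 2 * C 0) (hHolder : ∀ x, ‖x‖ ≤ θ → C 0 - C x ≤ b * ‖x‖ ^ β)
    (hℓ : 0 < ℓ) (hp₀ : log 2 * p₀ ^ 2 = log ℓ - log θ) (hp₀0 : 0 ≤ p₀) (hp : p₀ ≤ p) :
    deficitModulus C (ℓ * 2 ^ (-(p ^ 2))) ≤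
      √(2 * C 0) * exp (β * log 2 / 2 * (p₀ ^ 2 - p ^ 2)) := by
  have hratio : ℓ * 2 ^ (-(p ^ 2)) / θ = exp (log 2 * (p₀ ^ 2 - p ^ 2)) := by
    rw [rpow_def_of_pos two_pos,
      show log 2 * (p₀ ^ 2 - p ^ 2) = log ℓ + log 2 * -(p ^ 2) - log θ by linarith,
      exp_sub, exp_add, exp_log hℓ, exp_log hθ]
  have hrθ : ℓ * 2 ^ (-(p ^ 2)) ≤ θ := by
    rw [← div_le_one hθ, hratio, exp_le_one_iff]
    exact mul_nonpos_of_nonneg_of_nonpos (log_nonneg one_le_two) (by nlinarith)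
  refine (deficitModulus_le_of_holder hb hβ hθ hbθ hHolder (by positivity) hrθ).trans_eq ?_
  rw [hratio, ← exp_mul, sqrt_mul' _ (exp_nonneg _), ← exp_half]
  ring_nf

lemma integrableOn_deficitModulus_dyadic_and_setIntegral_le {b β θ ℓ p₀ : ℝ}
    (hC : ∀ x, |C x| ≤ C 0) (hb : 0 ≤ b) (hβ : 0 < β) (hθ : 0 < θ)
    (hbθ : b * θ ^ β ≤ 2 * C 0) (hHolder : ∀ x, ‖x‖ ≤ θ → C 0 - C x ≤ b * ‖x‖ ^ β)
    (hℓ : 0 < ℓ) (hp₀ : log 2 * p₀ ^ 2 = log ℓ - log θ) (hp₀1 : 1 ≤ p₀) :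
    IntegrableOn (fun p : ℝ => deficitModulus C (ℓ * 2 ^ (-(p ^ 2)))) (Ioi 1) ∧
      ∫ p in Ioi (1 : ℝ), deficitModulus C (ℓ * 2 ^ (-(p ^ 2))) ≤
        √(2 * C 0) * (p₀ + 1 / (β * log 2)) := by
  have hmeas := aemeasurable_restrict_of_antitoneOn (μ := volume) measurableSet_Ioi
    ((antitoneOn_deficitModulus_dyadic hC hℓ.le).mono (Ioi_subset_Ici zero_le_one))
  obtain ⟨hint, hI⟩ := integrableOn_Ioi_and_setIntegral_le_of_bounded_of_le_exp_sq
    (by positivity) hp₀1 (by positivity) hmeas.aestronglyMeasurable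
    (fun p _ => deficitModulus_nonneg hC (by positivity))
    (fun p _ => deficitModulus_le_sqrt_two_mul hC (by positivity))
    (fun p hp => deficitModulus_dyadic_le_exp hb hβ.le hθ hbθ hHolder hℓ hp₀ (by positivity) hp.le)
  refine ⟨hint, hI.trans ?_⟩
  have hβlog : 0 < β * log 2 := mul_pos hβ (log_pos one_lt_two)
  have htail : √(2 * C 0) / (2 * (β * log 2 / 2) * p₀) ≤ √(2 * C 0) / (β * log 2) :=
    div_le_div_of_nonneg_left (sqrt_nonneg _) hβlog (by nlinarith)
  linarith [mul_one_div (√(2 * C 0)) (β * log 2), sqrt_nonneg (2 * C 0)]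

end DeficitModulus

/-- The constant `8.3` bounds `(4 + 2√2) / √(log 2) ≈ 8.2`, and `1.7 = 10 - 8.3`. -/
noncomputable def entropyThreshold (β θ : ℝ) : ℝ :=
  exp (max 1 ((1 + (4 + 2 * √2) / (β * log 2) + 8.3 * √(-log θ)) / 1.7) ^ 2)

lemma one_lt_entropyThreshold (β θ : ℝ) : 1 < entropyThreshold β θ :=
  one_lt_exp_iff.2 (pow_pos (one_pos.trans_le (le_max_left _ _)) 2)

lemma four_add_two_mul_sqrt_two_le : 4 + 2 * √2 ≤ 8.3 * √(log 2) := by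
  have h2 : √2 ≤ 1.415 := by nlinarith [sq_sqrt (show (0 : ℝ) ≤ 2 by norm_num), sqrt_nonneg 2]
  have hlog : 0.83 ≤ √(log 2) := le_sqrt_of_sq_le (by nlinarith [log_two_gt_d9])
  linarith

lemma entropyThreshold_spec {β θ ℓ : ℝ} (hθ : 0 < θ) (hθ1 : θ ≤ 1)
    (hℓ : entropyThreshold β θ ≤ ℓ) :
    1 ≤ (log ℓ - log θ) / log 2 ∧
      1 + (4 + 2 * √2) * (√((log ℓ - log θ) / log 2) + 1 / (β * log 2)) ≤ 10 * √(log ℓ) := by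
  set Q := max 1 ((1 + (4 + 2 * √2) / (β * log 2) + 8.3 * √(-log θ)) / 1.7)
  have hlog2 : 0 < log 2 := log_pos one_lt_two
  have hT : 0 ≤ -log θ := neg_nonneg.2 (log_nonpos hθ.le hθ1)
  have hQL : Q ^ 2 ≤ log ℓ := by
    simpa using log_le_log (exp_pos _) hℓ
  have hQ : Q ≤ √(log ℓ) := le_sqrt_of_sq_le hQL
  have hL1 : 1 ≤ log ℓ := (one_le_pow₀ (le_max_left _ _)).trans hQL
  refine ⟨(one_le_div hlog2).2 (by linarith [log_two_lt_d9]), ?_⟩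
  have hp₀ : √((log ℓ - log θ) / log 2) ≤ (√(log ℓ) + √(-log θ)) / √(log 2) := by
    rw [sqrt_div' _ hlog2.le, sub_eq_add_neg]
    gcongr
    refine sqrt_le_iff.2 ⟨by positivity, ?_⟩
    nlinarith [sq_sqrt (zero_le_one.trans hL1), sq_sqrt hT, sqrt_nonneg (log ℓ),
      sqrt_nonneg (-log θ)]
  have hcoef : (4 + 2 * √2) * √((log ℓ - log θ) / log 2) ≤ 8.3 * (√(log ℓ) + √(-log θ)) := by
    calc (4 + 2 * √2) * √((log ℓ - log θ) / log 2)
        ≤ (4 + 2 * √2) * ((√(log ℓ) + √(-log θ)) / √(log 2)) := by gcongr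
      _ = (4 + 2 * √2) / √(log 2) * (√(log ℓ) + √(-log θ)) := by ring
      _ ≤ 8.3 * (√(log ℓ) + √(-log θ)) := by
        gcongr
        exact div_le_of_le_mul₀ (sqrt_nonneg _) (by norm_num) four_add_two_mul_sqrt_two_le
  have hQ' : (1 + (4 + 2 * √2) / (β * log 2) + 8.3 * √(-log θ)) / 1.7 ≤ √(log ℓ) :=
    (le_max_right _ _).trans hQ
  rw [div_le_iff₀ (by norm_num)] at hQ'
  rw [mul_add, mul_one_div]
  linarith

theorem entropy_integral_log_bound_general
    (d : ℕ)
    (C : (Fin d → ℝ) → ℝ)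
    (hC0pos : 0 < C 0) (hCbd : ∀ x, |C x| ≤ C 0)
    (b β θ : ℝ) (hb : 0 < b) (hβ : 0 < β)
    (hθpos : 0 < θ) (hθle : θ ≤ min 1 ((2 * C 0 / b) ^ (1 / β)))
    (hHolder : ∀ x : Fin d → ℝ, ‖x‖ ≤ θ → C 0 - C x ≤ b * ‖x‖ ^ β) :
    ∃ ℓH : ℝ, 1 < ℓH ∧ ∀ ℓ : ℝ, ℓH ≤ ℓ →
      IntegrableOn
        (fun p : ℝ => sSup ((fun x => Real.sqrt (C 0 - C x)) ''
          {x : Fin d → ℝ | ‖x‖ ≤ ℓ * 2 ^ (-(p ^ 2))}))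
        (Set.Ioi (1 : ℝ)) ∧
      Real.sqrt (C 0) +
          (2 + 2 ^ ((3 : ℝ) / 2)) *
            ∫ p in Set.Ioi (1 : ℝ),
              sSup ((fun x => Real.sqrt (C 0 - C x)) ''
                {x : Fin d → ℝ | ‖x‖ ≤ ℓ * 2 ^ (-(p ^ 2))})
        ≤ 10 * Real.sqrt (C 0 * Real.log ℓ) := by
  have hθ1 : θ ≤ 1 := hθle.trans (min_le_left _ _)
  have hbθ : b * θ ^ β ≤ 2 * C 0 :=
    mul_rpow_le_of_le_rpow_one_div hb hβ hθpos.le (by positivity) (hθle.trans (min_le_right _ _))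
  refine ⟨entropyThreshold β θ, one_lt_entropyThreshold β θ, fun ℓ hℓ => ?_⟩
  have hℓ0 : 0 < ℓ := one_pos.trans ((one_lt_entropyThreshold β θ).trans_le hℓ)
  obtain ⟨hratio, hnum⟩ := entropyThreshold_spec hθpos hθ1 hℓ
  set p₀ := √((log ℓ - log θ) / log 2)
  have hp₀ : log 2 * p₀ ^ 2 = log ℓ - log θ := by
    rw [sq_sqrt (zero_le_one.trans hratio)]
    field_simp
  obtain ⟨hint, hI⟩ := integrableOn_deficitModulus_dyadic_and_setIntegral_le hCbd hb.le hβ hθpos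
    hbθ hHolder hℓ0 hp₀ (one_le_sqrt.2 hratio)
  refine ⟨hint, ?_⟩
  have h32 : (2 : ℝ) ^ ((3 : ℝ) / 2) = 2 * √2 := by
    rw [show (3 : ℝ) / 2 = 1 + 1 / 2 by norm_num, rpow_add two_pos, rpow_one, ← sqrt_eq_rpow]
  rw [sqrt_mul zero_le_two] at hI
  calc √(C 0) + (2 + 2 ^ ((3 : ℝ) / 2)) * ∫ p in Ioi (1 : ℝ), deficitModulus C (ℓ * 2 ^ (-(p ^ 2)))
      ≤ √(C 0) + (2 + 2 * √2) * (√2 * √(C 0) * (p₀ + 1 / (β * log 2))) := by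
        rw [h32]
        gcongr
    _ = √(C 0) * (1 + (4 + 2 * √2) * (p₀ + 1 / (β * log 2))) := by
        linear_combination (2 * √(C 0) * (p₀ + 1 / (β * log 2))) * mul_self_sqrt zero_le_two
    _ ≤ √(C 0) * (10 * √(log ℓ)) := by gcongr
    _ = 10 * √(C 0 * log ℓ) := by
        rw [sqrt_mul hC0pos.le]
        ring

/-- There is a length `ℓ_H ∈ (1,∞)` (depending only on `θ` and `β`) such that for all
`ℓ ≥ ℓ_H` one has `√C(0) + (2 + 2^{3/2}) 𝒥(ℓ) ≤ 10 √(C(0) ln ℓ)`, where `𝒥` is the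
entropy integral of the covariance function `C`. -/
theorem entropy_integral_log_bound
    (d : ℕ) (hd : 1 ≤ d)
    (C : (Fin d → ℝ) → ℝ)
    (hC0pos : 0 < C 0) (hCbd : ∀ x, |C x| ≤ C 0)
    (b β θ : ℝ) (hb : 0 < b) (hβ : 0 < β) (hβ1 : β ≤ 1)
    (hθpos : 0 < θ) (hθle : θ ≤ min 1 ((2 * C 0 / b) ^ (1 / β)))
    (hHolder : ∀ x : Fin d → ℝ, ‖x‖ ≤ θ → C 0 - C x ≤ b * ‖x‖ ^ β) :
    ∃ ℓH : ℝ, 1 < ℓH ∧ ∀ ℓ : ℝ, ℓH ≤ ℓ →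
      IntegrableOn
        (fun p : ℝ => sSup ((fun x => Real.sqrt (C 0 - C x)) ''
          {x : Fin d → ℝ | ‖x‖ ≤ ℓ * 2 ^ (-(p ^ 2))}))
        (Set.Ioi (1 : ℝ)) ∧
      Real.sqrt (C 0) +
          (2 + 2 ^ ((3 : ℝ) / 2)) *
            ∫ p in Set.Ioi (1 : ℝ),
              sSup ((fun x => Real.sqrt (C 0 - C x)) ''
                {x : Fin d → ℝ | ‖x‖ ≤ ℓ * 2 ^ (-(p ^ 2))})
        ≤ 10 * Real.sqrt (C 0 * Real.log ℓ) :=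
  entropy_integral_log_bound_general d C hC0pos hCbd b β θ hb hβ hθpos hθle hHolder
end

section
/- Let d ≥ 1, let a : ℝ^d → ℝ^d be continuously differentiable with vanishing divergence ∇·a = 0, let φ : ℝ^d → ℝ be twice continuously differentiable, and let ψ : ℝ^d → ℂ be twice continuously differentiable with compact support. Then ∫_{ℝ^d} φ(x) ∑_{j=1}^{d} |i ∂_j ψ(x) + a_j(x) ψ(x)|² dx = (1/2) ∫_{ℝ^d} (Δφ)(x) |ψ(x)|² dx + Re ∫_{ℝ^d} \overline{ψ(x)} φ(x) [ −Δψ(x) + 2i a(x)·∇ψ(x) + |a(x)|² ψ(x) ] dx. -/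
/-!
With `ρ = |ψ|²` one has `∂ⱼ²ρ = 2 |∂ⱼψ|² + 2 Re (ψ̄ ∂ⱼ²ψ)`, while the magnetic terms cancel
pointwise: `|i ∂ⱼψ + aⱼψ|² = |∂ⱼψ|² + Re (ψ̄ (2i aⱼ ∂ⱼψ + aⱼ² ψ))`. Hence the left-hand integrand is
`½ φ Δρ + Re (ψ̄ φ (-Δψ + 2i a·∇ψ + |a|² ψ))`, and two integrations by parts against the compactly
supported `ρ` turn `∫ φ Δρ` into `∫ Δφ ρ`.
-/

open MeasureTheory ComplexConjugate

section

variable {E F : Type*} [NormedAddCommGroup E] [NormedSpace ℝ E]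

theorem ContDiff.fderiv_apply_const [NormedAddCommGroup F] [NormedSpace ℝ F] {f : E → F}
    {m n : WithTop ℕ∞} (hf : ContDiff ℝ n f) (hmn : m + 1 ≤ n) (v : E) :
    ContDiff ℝ m fun x => fderiv ℝ f x v :=
  (hf.fderiv_right hmn).clm_apply contDiff_const

theorem ContDiff.continuous_fderiv_fderiv_apply [NormedAddCommGroup F] [NormedSpace ℝ F]
    {f : E → F} (hf : ContDiff ℝ 2 f) (v w : E) :
    Continuous fun x => fderiv ℝ (fun y => fderiv ℝ f y v) x w :=
  ((hf.fderiv_apply_const (m := 1) le_rfl v).fderiv_apply_const (m := 0) (by norm_num) w).continuous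

theorem fderiv_fderiv_norm_sq_apply [NormedAddCommGroup F] [InnerProductSpace ℝ F] {f : E → F}
    (hf : ContDiff ℝ 2 f) (v x : E) :
    fderiv ℝ (fun y => fderiv ℝ (fun z => ‖f z‖ ^ 2) y v) x v
      = 2 * (‖fderiv ℝ f x v‖ ^ 2 + inner ℝ (f x) (fderiv ℝ (fun y => fderiv ℝ f y v) x v)) := by
  have hf1 : Differentiable ℝ f := hf.differentiable two_ne_zero
  have hdf : Differentiable ℝ fun y => fderiv ℝ f y v :=
    (hf.fderiv_apply_const (m := 1) le_rfl v).differentiable one_ne_zero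
  have hfirst : (fun y => fderiv ℝ (fun z => ‖f z‖ ^ 2) y v)
      = fun y => 2 * inner ℝ (f y) (fderiv ℝ f y v) := by
    funext y
    rw [((hf1 y).hasFDerivAt.norm_sq).fderiv]
    simp
  rw [hfirst, fderiv_const_mul ((hf1 x).inner ℝ (hdf x)), FunLike.coe_smul, Pi.smul_apply,
    fderiv_inner_apply ℝ (hf1 x) (hdf x), smul_eq_mul, real_inner_self_eq_norm_sq]
  ring

variable {𝕜 : Type*} [NormedField 𝕜] [NormedAlgebra ℝ 𝕜] [MeasurableSpace E] [BorelSpace E]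
  {μ : Measure E}

theorem integrable_mul_fderiv_fderiv_apply [IsFiniteMeasureOnCompacts μ] {f g : E → 𝕜}
    (hf : Continuous f) (hg : ContDiff ℝ 2 g) (hgc : HasCompactSupport g) (v w : E) :
    Integrable (fun x => f x * fderiv ℝ (fun y => fderiv ℝ g y v) x w) μ :=
  (hf.mul (hg.continuous_fderiv_fderiv_apply v w)).integrable_of_hasCompactSupport
    ((hgc.fderiv_apply ℝ v).fderiv_apply ℝ w).mul_left

variable [FiniteDimensional ℝ E] [μ.IsAddHaarMeasure]

theorem integral_mul_fderiv_eq_neg_fderiv_mul_of_hasCompactSupport {f g : E → 𝕜}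
    (hf : ContDiff ℝ 1 f) (hg : ContDiff ℝ 1 g) (hgc : HasCompactSupport g) (v : E) :
    ∫ x, f x * fderiv ℝ g x v ∂μ = -∫ x, fderiv ℝ f x v * g x ∂μ := by
  have hdf := (hf.fderiv_apply_const (m := 0) le_rfl v).continuous
  have hdg := (hg.fderiv_apply_const (m := 0) le_rfl v).continuous
  refine integral_mul_fderiv_eq_neg_fderiv_mul_of_integrable ?_ ?_ ?_
    (fun x _ => hf.differentiable one_ne_zero x) (fun x _ => hg.differentiable one_ne_zero x)
  · exact (hdf.mul hg.continuous).integrable_of_hasCompactSupport hgc.mul_left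
  · exact (hf.continuous.mul hdg).integrable_of_hasCompactSupport (hgc.fderiv_apply ℝ v).mul_left
  · exact (hf.continuous.mul hg.continuous).integrable_of_hasCompactSupport hgc.mul_left

theorem integral_mul_fderiv_fderiv_eq_fderiv_fderiv_mul {f g : E → 𝕜}
    (hf : ContDiff ℝ 2 f) (hg : ContDiff ℝ 2 g) (hgc : HasCompactSupport g) (v : E) :
    ∫ x, f x * fderiv ℝ (fun y => fderiv ℝ g y v) x v ∂μ
      = ∫ x, fderiv ℝ (fun y => fderiv ℝ f y v) x v * g x ∂μ := by
  rw [integral_mul_fderiv_eq_neg_fderiv_mul_of_hasCompactSupport (hf.of_le one_le_two)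
      (hg.fderiv_apply_const le_rfl v) (hgc.fderiv_apply ℝ v),
    integral_mul_fderiv_eq_neg_fderiv_mul_of_hasCompactSupport (hf.fderiv_apply_const le_rfl v)
      (hg.of_le one_le_two) hgc, neg_neg]

theorem integral_mul_sum_fderiv_fderiv_eq {ι : Type*} (s : Finset ι) (v : ι → E) {f g : E → 𝕜}
    (hf : ContDiff ℝ 2 f) (hg : ContDiff ℝ 2 g) (hgc : HasCompactSupport g) :
    ∫ x, f x * ∑ i ∈ s, fderiv ℝ (fun y => fderiv ℝ g y (v i)) x (v i) ∂μ
      = ∫ x, (∑ i ∈ s, fderiv ℝ (fun y => fderiv ℝ f y (v i)) x (v i)) * g x ∂μ := by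
  simp_rw [Finset.mul_sum, Finset.sum_mul]
  rw [integral_finsetSum _ fun i _ => integrable_mul_fderiv_fderiv_apply hf.continuous hg hgc _ _,
    integral_finsetSum _ fun i _ => Continuous.integrable_of_hasCompactSupport
      (f := fun x => _ * g x) ((hf.continuous_fderiv_fderiv_apply (v i) (v i)).mul
      hg.continuous) hgc.mul_left]
  exact Finset.sum_congr rfl fun i _ => integral_mul_fderiv_fderiv_eq_fderiv_fderiv_mul hf hg hgc _

end

theorem Complex.norm_I_mul_add_ofReal_mul_sq (u z : ℂ) (c : ℝ) :
    ‖I * u + c * z‖ ^ 2 = ‖u‖ ^ 2 + (conj z * (2 * I * c * u + c ^ 2 * z)).re := by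
  simp only [← Complex.ofReal_pow, Complex.sq_norm, Complex.normSq_apply, Complex.mul_re,
    Complex.mul_im, Complex.add_re, Complex.add_im, Complex.I_re, Complex.I_im,
    Complex.ofReal_re, Complex.ofReal_im, Complex.conj_re, Complex.conj_im, Complex.re_ofNat,
    Complex.im_ofNat]
  ring

theorem Complex.sum_norm_I_mul_add_ofReal_mul_sq {ι : Type*} (s : Finset ι) (u : ι → ℂ)
    (c : ι → ℝ) (z : ℂ) :
    ∑ i ∈ s, ‖I * u i + c i * z‖ ^ 2 = ∑ i ∈ s, ‖u i‖ ^ 2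
      + (conj z * (2 * I * ∑ i ∈ s, (c i : ℂ) * u i + ((∑ i ∈ s, c i ^ 2 : ℝ) : ℂ) * z)).re := by
  rw [Finset.sum_congr rfl fun i _ => norm_I_mul_add_ofReal_mul_sq (u i) z (c i),
    Finset.sum_add_distrib, ← Complex.re_sum]
  congr 2
  push_cast
  simp only [Finset.mul_sum, Finset.sum_mul, ← Finset.sum_add_distrib]
  exact Finset.sum_congr rfl fun i _ => by ring

theorem magnetic_energy_density_eq {E ι : Type*} [NormedAddCommGroup E] [NormedSpace ℝ E]
    (s : Finset ι) (v : ι → E) (a : E → ι → ℝ) (φ : E → ℝ) {ψ : E → ℂ} (hψ : ContDiff ℝ 2 ψ)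
    (x : E) :
    φ x * ∑ j ∈ s, ‖Complex.I * fderiv ℝ ψ x (v j) + (a x j : ℂ) * ψ x‖ ^ 2
      = 1 / 2 * (φ x * ∑ j ∈ s, fderiv ℝ (fun y => fderiv ℝ (fun z => ‖ψ z‖ ^ 2) y (v j)) x (v j))
        + (conj (ψ x) * (φ x : ℂ) *
            (-(∑ j ∈ s, fderiv ℝ (fun y => fderiv ℝ ψ y (v j)) x (v j))
              + 2 * Complex.I * ∑ j ∈ s, (a x j : ℂ) * fderiv ℝ ψ x (v j)
              + ((∑ j ∈ s, (a x j) ^ 2 : ℝ) : ℂ) * ψ x)).re := by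
  rw [Complex.sum_norm_I_mul_add_ofReal_mul_sq]
  simp only [fderiv_fderiv_norm_sq_apply hψ, Complex.inner, ← Finset.mul_sum,
    Finset.sum_add_distrib, ← Complex.re_sum, ← Finset.sum_mul]
  simp only [Complex.mul_re, Complex.mul_im, Complex.add_re, Complex.add_im, Complex.neg_re,
    Complex.neg_im, Complex.ofReal_re, Complex.ofReal_im, Complex.conj_re, Complex.conj_im]
  ring

theorem magnetic_integration_by_parts_general
    (d : ℕ)
    (a : (Fin d → ℝ) → (Fin d → ℝ)) (ha : ContDiff ℝ 1 a)
    (φ : (Fin d → ℝ) → ℝ) (hφ : ContDiff ℝ 2 φ)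
    (ψ : (Fin d → ℝ) → ℂ) (hψ : ContDiff ℝ 2 ψ) (hψc : HasCompactSupport ψ) :
    ∫ x, φ x * ∑ j, ‖Complex.I * fderiv ℝ ψ x (Pi.single j 1) + (a x j : ℂ) * ψ x‖ ^ 2
      = (1 / 2) * (∫ x, (∑ j, fderiv ℝ (fun y => fderiv ℝ φ y (Pi.single j 1)) x
            (Pi.single j 1)) * ‖ψ x‖ ^ 2)
        + (∫ x, (starRingEnd ℂ) (ψ x) * (φ x : ℂ) *
            (-(∑ j, fderiv ℝ (fun y => fderiv ℝ ψ y (Pi.single j 1)) x (Pi.single j 1))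
              + 2 * Complex.I * ∑ j, (a x j : ℂ) * fderiv ℝ ψ x (Pi.single j 1)
              + ((∑ j, (a x j) ^ 2 : ℝ) : ℂ) * ψ x)).re := by
  set M : (Fin d → ℝ) → ℂ := fun x => (starRingEnd ℂ) (ψ x) * (φ x : ℂ) *
    (-(∑ j, fderiv ℝ (fun y => fderiv ℝ ψ y (Pi.single j 1)) x (Pi.single j 1))
      + 2 * Complex.I * ∑ j, (a x j : ℂ) * fderiv ℝ ψ x (Pi.single j 1)
      + ((∑ j, (a x j) ^ 2 : ℝ) : ℂ) * ψ x)
  set Δρ : (Fin d → ℝ) → ℝ := fun x =>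
    ∑ j, fderiv ℝ (fun y => fderiv ℝ (fun z => ‖ψ z‖ ^ 2) y (Pi.single j 1)) x (Pi.single j 1)
  have hρ : ContDiff ℝ 2 fun x => ‖ψ x‖ ^ 2 := hψ.norm_sq ℝ
  have hρc : HasCompactSupport fun x => ‖ψ x‖ ^ 2 :=
    hψc.comp_left (g := fun z : ℂ => ‖z‖ ^ 2) (by simp)
  have hpt : ∀ x, φ x * ∑ j, ‖Complex.I * fderiv ℝ ψ x (Pi.single j 1) + (a x j : ℂ) * ψ x‖ ^ 2
      = 1 / 2 * (φ x * Δρ x) + (M x).re :=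
    magnetic_energy_density_eq _ (fun j => Pi.single j 1) a φ hψ
  have hΔρ : Integrable fun x => φ x * Δρ x := by
    simp_rw [Δρ, Finset.mul_sum]
    exact integrable_finsetSum _ fun j _ =>
      integrable_mul_fderiv_fderiv_apply hφ.continuous hρ hρc _ _
  have hMint : Integrable M := by
    have hDψ : ∀ j, Continuous fun x => fderiv ℝ ψ x (Pi.single j 1) := fun j =>
      (hψ.fderiv_apply_const (m := 0) (by norm_num) _).continuous
    have hD2ψ : ∀ j, Continuous fun x =>
        fderiv ℝ (fun y => fderiv ℝ ψ y (Pi.single j 1)) x (Pi.single j 1) := fun j =>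
      hψ.continuous_fderiv_fderiv_apply _ _
    have ha' : ∀ j, Continuous fun x => a x j := fun j => (continuous_apply j).comp ha.continuous
    refine Continuous.integrable_of_hasCompactSupport (by fun_prop) ?_
    exact (hψc.comp_left (map_zero (starRingEnd ℂ))).mul_right.mul_right
  rw [integral_congr_ae (.of_forall hpt),
    integral_add (hΔρ.const_mul _) (g := fun x => (M x).re) hMint.re, integral_const_mul,
    integral_mul_sum_fderiv_fderiv_eq _ _ hφ hρ hρc]
  exact congrArg _ (integral_re hMint)

/-- Magnetic integration-by-parts identity: for a divergence-free `C¹` vector potential `a`,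
a `C²` real function `φ` and a `C²` compactly supported complex function `ψ`,
`⟨φ, |(i∇+a)ψ|²⟩ = (1/2)⟨∇²φ, |ψ|²⟩ + Re⟨ψφ, (i∇+a)²ψ⟩`. -/
theorem magnetic_integration_by_parts
    (d : ℕ) (hd : 1 ≤ d)
    (a : (Fin d → ℝ) → (Fin d → ℝ)) (ha : ContDiff ℝ 1 a)
    (hdiv : ∀ x, ∑ j, fderiv ℝ (fun y => a y j) x (Pi.single j 1) = 0)
    (φ : (Fin d → ℝ) → ℝ) (hφ : ContDiff ℝ 2 φ)
    (ψ : (Fin d → ℝ) → ℂ) (hψ : ContDiff ℝ 2 ψ) (hψc : HasCompactSupport ψ) :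
    ∫ x, φ x * ∑ j, ‖Complex.I * fderiv ℝ ψ x (Pi.single j 1) + (a x j : ℂ) * ψ x‖ ^ 2
      = (1 / 2) * (∫ x, (∑ j, fderiv ℝ (fun y => fderiv ℝ φ y (Pi.single j 1)) x
            (Pi.single j 1)) * ‖ψ x‖ ^ 2)
        + (∫ x, (starRingEnd ℂ) (ψ x) * (φ x : ℂ) *
            (-(∑ j, fderiv ℝ (fun y => fderiv ℝ ψ y (Pi.single j 1)) x (Pi.single j 1))
              + 2 * Complex.I * ∑ j, (a x j : ℂ) * fderiv ℝ ψ x (Pi.single j 1)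
              + ((∑ j, (a x j) ^ 2 : ℝ) : ℂ) * ψ x)).re :=
  magnetic_integration_by_parts_general d a ha φ hφ ψ hψ hψc
end
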